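/- Let n, μ1 ∈ ℝ with n+μ1 > 1 and let δ ≥ 0 satisfy √δ ≤ n − d_*(n+μ1). Then for every p with 1 < p < p_S(n+μ1) one has q(p) := κ − (n+μ1−1)·p/2 + n + 1 > 0, where κ := (μ1−1−√δ)/2. -/

import Mathlib

/-! The square roots in `p_S` and `d_*` cancel: `(ν - 1) p_S(ν) = d_*(ν) + ν + 1`. Hence
`q(p) > q(p_S) = (n - d_*(n + μ1) - √δ) / 2 ≥ 0` for `p < p_S`, since `q` decreases in `p`. -/

/-- Strauss exponent `p_S(ν)` (as a real number; meaningful for `ν > 1`). -/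
noncomputable def pS (ν : ℝ) : ℝ :=
  (ν + 1 + Real.sqrt (ν ^ 2 + 10 * ν - 7)) / (2 * (ν - 1))

/-- `d_*(ν)`: zero for `ν ≤ 1`, and `(−1−ν+√(ν²+10ν−7))/2` for `ν > 1`. -/
noncomputable def dStar (ν : ℝ) : ℝ :=
  if 1 < ν then (-1 - ν + Real.sqrt (ν ^ 2 + 10 * ν - 7)) / 2 else 0

theorem sub_one_mul_pS {ν : ℝ} (hν : 1 < ν) : (ν - 1) * pS ν = dStar ν + ν + 1 := by
  rw [pS, dStar, if_pos hν]
  field_simp [(sub_pos.mpr hν).ne']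
  ring

theorem q_pos_of_sqrt_delta_le_general (n μ1 δ : ℝ) (hnμ : 1 < n + μ1)
    (h : Real.sqrt δ ≤ n - dStar (n + μ1)) :
    ∀ p : ℝ, 1 < p → p < pS (n + μ1) →
      0 < (μ1 - 1 - Real.sqrt δ) / 2 - (n + μ1 - 1) * p / 2 + n + 1 := by
  intro p _ hp
  have hp' : (n + μ1 - 1) * p < dStar (n + μ1) + (n + μ1) + 1 :=
    sub_one_mul_pS hnμ ▸ mul_lt_mul_of_pos_left hp (by linarith)
  linarith

/-- If `√δ ≤ n − d_*(n+μ1)` then `q(p) > 0` for all `1 < p < p_S(n+μ1)`. -/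
theorem q_pos_of_sqrt_delta_le (n μ1 δ : ℝ) (hnμ : 1 < n + μ1) (hδ : 0 ≤ δ)
    (h : Real.sqrt δ ≤ n - dStar (n + μ1)) :
    ∀ p : ℝ, 1 < p → p < pS (n + μ1) →
      0 < (μ1 - 1 - Real.sqrt δ) / 2 - (n + μ1 - 1) * p / 2 + n + 1 :=
  q_pos_of_sqrt_delta_le_general n μ1 δ hnμ h
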